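/- Fix a positive integer m. For every non-negative integer n, the coefficient of q^n in the formal power series q^{m²}·∏_{k=1}^{m}(1−q^k)^{−2} ∈ ℤ⟦q⟧ equals the number of partitions of n whose Durfee square has side length m. -/

import Mathlib

open PowerSeries

/-- The inverse `(1 - q^k)⁻¹ ∈ ℤ⟦q⟧` (for `k ≥ 1` the constant term is `1`, a unit). -/
noncomputable def oneMinusXInv (k : ℕ) : PowerSeries ℤ :=
  PowerSeries.invOfUnit (1 - PowerSeries.X ^ k) 1

/-- The Durfee square of the partition `P` of `n` has side length `d`:
`P` has at least `d` parts of size at least `d`, but it is not the case that `P` has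
at least `d+1` parts of size at least `d+1`; i.e. `d` is the largest integer `e ≥ 0`
such that `P` has at least `e` parts each of size at least `e`. -/
def HasDurfeeSide {n : ℕ} (P : Nat.Partition n) (d : ℕ) : Prop :=
  d ≤ (P.parts.filter fun p => d ≤ p).card ∧
    ¬ (d + 1 ≤ (P.parts.filter fun p => d + 1 ≤ p).card)

instance {n : ℕ} (P : Nat.Partition n) (d : ℕ) : Decidable (HasDurfeeSide P d) :=
  inferInstanceAs (Decidable (_ ∧ _))

/-!
A partition with Durfee square of side `m` is the `m × m` square together with the part of
its diagram to the right of the square, which has at most `m` rows, and the part below it,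
whose rows have length at most `m`. Reading the right part by columns, the partition
corresponds to a pair of partitions into parts `≤ m` of total size `n - m²`; and
`∏_{k ≤ m} (1 - q^k)⁻¹` is the generating function of partitions into parts `≤ m`.
Reading by columns is expressed through the numbers of parts `≥ v`, which determine a
multiset of positive integers.
-/

open Finset

-- `conjSeq f K i` is the length of the `i`-th column of the diagram with rows `f 0, …, f (K-1)`.
def conjSeq (f : ℕ → ℕ) (K i : ℕ) : ℕ := #{j ∈ range K | i + 1 ≤ f j}

theorem conjSeq_le (f : ℕ → ℕ) (K i : ℕ) : conjSeq f K i ≤ K :=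
  (card_filter_le _ _).trans_eq (card_range K)

theorem card_filter_range_succ_le (c K : ℕ) : #{i ∈ range K | i + 1 ≤ c} = min c K := by
  rw [← card_range (min c K)]
  congr 1
  ext i
  simp only [mem_filter, mem_range, lt_min_iff]
  omega

theorem succ_le_conjSeq_iff {f : ℕ → ℕ} (hf : Antitone f) {K j : ℕ} (hj : j < K) (i : ℕ) :
    j + 1 ≤ conjSeq f K i ↔ i + 1 ≤ f j := by
  constructor
  · intro h
    by_contra hlt
    have hsub : {j' ∈ range K | i + 1 ≤ f j'} ⊆ range j := fun j' hj' => by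
      rw [mem_filter] at hj'
      rw [mem_range]
      by_contra hge
      exact hlt (hj'.2.trans (hf (not_lt.1 hge)))
    have := (card_le_card hsub).trans_eq (card_range j)
    unfold conjSeq at h
    omega
  · intro h
    have hsub : range (j + 1) ⊆ {j' ∈ range K | i + 1 ≤ f j'} := fun j' hj' => by
      rw [mem_range] at hj'
      exact mem_filter.2 ⟨mem_range.2 (by omega), h.trans (hf (by omega))⟩
    exact (card_range _).symm.trans_le (card_le_card hsub)

theorem conjSeq_conjSeq {f : ℕ → ℕ} (hf : Antitone f) {K : ℕ} (hK : ∀ j, K ≤ j → f j = 0)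
    (L j : ℕ) : conjSeq (conjSeq f K) L j = min (f j) L := by
  rcases lt_or_ge j K with hj | hj
  · rw [conjSeq, filter_congr fun i _ => succ_le_conjSeq_iff hf hj i,
      card_filter_range_succ_le]
  · rw [hK j hj, conjSeq, filter_false_of_mem fun i _ => by have := conjSeq_le f K i; omega]
    simp

namespace Multiset

def numGE (s : Multiset ℕ) (v : ℕ) : ℕ := card (s.filter (v ≤ ·))

variable {s t : Multiset ℕ}

theorem numGE_antitone (s : Multiset ℕ) : Antitone s.numGE := fun _ _ h =>
  card_le_card (monotone_filter_right s fun _ hp => h.trans hp)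

theorem numGE_le_card (s : Multiset ℕ) (v : ℕ) : s.numGE v ≤ card s :=
  card_le_card (filter_le _ s)

theorem numGE_add (s t : Multiset ℕ) (v : ℕ) : (s + t).numGE v = s.numGE v + t.numGE v := by
  simp [numGE, filter_add]

theorem numGE_replicate (c x v : ℕ) : (replicate c x).numGE v = if v ≤ x then c else 0 := by
  split_ifs with h
  · rw [numGE, filter_eq_self.2 fun p hp => eq_of_mem_replicate hp ▸ h, card_replicate]
  · rw [numGE, filter_eq_nil.2 fun p hp => eq_of_mem_replicate hp ▸ h, card_zero]

theorem numGE_cons (a : ℕ) (s : Multiset ℕ) (v : ℕ) :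
    (a ::ₘ s).numGE v = s.numGE v + if v ≤ a then 1 else 0 := by
  rw [← singleton_add, add_comm, numGE_add, ← replicate_one, numGE_replicate]

theorem numGE_eq_zero (h : ∀ p ∈ s, p < v) : s.numGE v = 0 := by
  simpa [numGE, filter_eq_nil] using fun p hp => h p hp

theorem numGE_eq_count_add (s : Multiset ℕ) (v : ℕ) :
    s.numGE v = count v s + s.numGE (v + 1) := by
  rw [numGE, numGE, count_eq_card_filter_eq, ← card_add,
    ← filter_add_not (v = ·) (s.filter (v ≤ ·)), filter_filter, filter_filter]
  congr 2 <;> apply filter_congr <;> omega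

theorem numGE_filter_lt_add {m v : ℕ} (hv : v ≤ m) :
    (s.filter (· < m)).numGE v + s.numGE m = s.numGE v := by
  rw [numGE, numGE, numGE, filter_filter, ← card_add,
    ← filter_add_not (· < m) (s.filter (v ≤ ·)), filter_filter, filter_filter]
  congr 2 <;> apply filter_congr <;> omega

theorem numGE_succ_filter_pos (s : Multiset ℕ) (i : ℕ) :
    (s.filter (0 < ·)).numGE (i + 1) = s.numGE (i + 1) := by
  rw [numGE, numGE, filter_filter]
  congr 1
  apply filter_congr
  omega

theorem numGE_succ_map_range (f : ℕ → ℕ) (K i : ℕ) :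
    ((range K).map f).numGE (i + 1) = conjSeq f K i := by
  rw [numGE, filter_map, card_map]
  rfl

theorem eq_of_numGE_succ_eq (hs : ∀ p ∈ s, 0 < p) (ht : ∀ p ∈ t, 0 < p)
    (h : ∀ v, s.numGE (v + 1) = t.numGE (v + 1)) : s = t := by
  ext v
  rcases v with _ | v
  · rw [count_eq_zero_of_notMem fun h0 => (hs 0 h0).false,
      count_eq_zero_of_notMem fun h0 => (ht 0 h0).false]
  · have := h v; have := h (v + 1)
    have := s.numGE_eq_count_add (v + 1); have := t.numGE_eq_count_add (v + 1)
    omega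

theorem sum_eq_sum_numGE {K : ℕ} (h : ∀ p ∈ s, p ≤ K) :
    s.sum = ∑ i ∈ Finset.range K, s.numGE (i + 1) := by
  induction s using Multiset.induction with
  | empty => simp [numGE]
  | cons a s ih =>
    simp_rw [numGE_cons, Finset.sum_add_distrib, sum_boole, Nat.cast_id,
      card_filter_range_succ_le, sum_cons, ih fun p hp => h p (mem_cons_of_mem hp),
      min_eq_left (h a (mem_cons_self a s)), add_comm]

theorem mul_numGE_le_sum (s : Multiset ℕ) (v : ℕ) : v * s.numGE v ≤ s.sum := calc
  v * s.numGE v ≤ (s.filter (v ≤ ·)).sum := by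
    rw [mul_comm]; exact card_nsmul_le_sum fun _ hp => (mem_filter.1 hp).2
  _ ≤ s.sum := le_self_add.trans_eq (by rw [← sum_add, filter_add_not])

end Multiset

namespace Durfee

open Multiset

-- Cut along the `m × m` square: `right` lists the column heights to the right of the square,
-- `below` the rows under it, and `glue` reassembles a diagram from these two pieces.
noncomputable def right (m : ℕ) (s : Multiset ℕ) : Multiset ℕ :=
  ((Multiset.range s.sum).map fun j => s.numGE (m + j + 1)).filter (0 < ·)

def below (m : ℕ) (s : Multiset ℕ) : Multiset ℕ :=
  s.filter (· < m) + replicate (s.numGE m - m) m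

def glue (m : ℕ) (A B : Multiset ℕ) : Multiset ℕ :=
  (Multiset.range m).map (fun i => m + A.numGE (i + 1)) + B

variable {m : ℕ} {s A B : Multiset ℕ}

theorem numGE_right (m : ℕ) (s : Multiset ℕ) (i : ℕ) :
    (right m s).numGE (i + 1) = conjSeq (fun j => s.numGE (m + j + 1)) s.sum i := by
  rw [right, numGE_succ_filter_pos, numGE_succ_map_range]

theorem mem_right {q : ℕ} (hq : q ∈ right m s) : 0 < q ∧ q ≤ s.numGE (m + 1) := by
  obtain ⟨hq, hpos⟩ := Multiset.mem_filter.1 hq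
  obtain ⟨j, -, rfl⟩ := Multiset.mem_map.1 hq
  exact ⟨hpos, s.numGE_antitone (by omega)⟩

theorem mem_below (hs : ∀ p ∈ s, 0 < p) (hD : s.numGE (m + 1) ≤ m) {q : ℕ}
    (hq : q ∈ below m s) : 0 < q ∧ q ≤ m := by
  rcases Multiset.mem_add.1 hq with hq | hq
  · obtain ⟨hq, hlt⟩ := Multiset.mem_filter.1 hq
    exact ⟨hs q hq, hlt.le⟩
  · obtain ⟨hne, rfl⟩ := Multiset.mem_replicate.1 hq
    refine ⟨Nat.pos_of_ne_zero fun hq0 => ?_, le_rfl⟩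
    subst hq0
    rw [numGE_eq_count_add, count_eq_zero_of_notMem fun h0 => (hs 0 h0).false] at hne
    omega

theorem numGE_below {v : ℕ} (hv : v ≤ m) (hD : m ≤ s.numGE m) :
    (below m s).numGE v + m = s.numGE v := by
  rw [below, numGE_add, numGE_replicate, if_pos hv]
  have := numGE_filter_lt_add (s := s) hv
  omega

theorem numGE_glue_of_le {v : ℕ} (hv : v ≤ m) :
    (glue m A B).numGE v = m + B.numGE v := by
  rw [glue, numGE_add, numGE, Multiset.filter_eq_self.2, Multiset.card_map, Multiset.card_range]
  intro p hp
  obtain ⟨i, -, rfl⟩ := Multiset.mem_map.1 hp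
  omega

theorem numGE_glue_add (hB : ∀ q ∈ B, q ≤ m) (j : ℕ) :
    (glue m A B).numGE (m + j + 1) = conjSeq (fun i => A.numGE (i + 1)) m j := by
  rw [glue, numGE_add, numGE_eq_zero (s := B) fun q hq => by have := hB q hq; omega, add_zero,
    numGE_succ_map_range, conjSeq, conjSeq]
  congr 1
  apply Finset.filter_congr
  omega

theorem glue_pos (hB : ∀ q ∈ B, 0 < q) : ∀ q ∈ glue m A B, 0 < q := by
  intro q hq
  rcases Multiset.mem_add.1 hq with hq | hq
  · obtain ⟨i, hi, rfl⟩ := Multiset.mem_map.1 hq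
    have := Multiset.mem_range.1 hi
    omega
  · exact hB q hq

theorem sum_glue (hA : ∀ q ∈ A, q ≤ m) :
    (glue m A B).sum = m * m + A.sum + B.sum := by
  rw [glue, sum_add]
  change (∑ i ∈ Finset.range m, (m + A.numGE (i + 1))) + B.sum = _
  rw [Finset.sum_add_distrib, Finset.sum_const, Finset.card_range, smul_eq_mul,
    ← sum_eq_sum_numGE hA]

theorem glue_right_below (hs : ∀ p ∈ s, 0 < p) (hD₁ : m ≤ s.numGE m)
    (hD₂ : s.numGE (m + 1) ≤ m) : glue m (right m s) (below m s) = s := by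
  apply eq_of_numGE_succ_eq (glue_pos fun q hq => (mem_below hs hD₂ hq).1) hs
  intro v
  rcases lt_or_ge v m with hv | hv
  · rw [numGE_glue_of_le hv, ← numGE_below hv hD₁, add_comm]
  · obtain ⟨j, rfl⟩ : ∃ j, v = m + j := ⟨v - m, by omega⟩
    have hcols : Antitone fun j => s.numGE (m + j + 1) := fun _ _ h =>
      s.numGE_antitone (by omega)
    have hzero : ∀ j, s.sum ≤ j → s.numGE (m + j + 1) = 0 := fun j hj =>
      numGE_eq_zero fun p hp => by have := le_sum_of_mem hp; omega
    simp only [numGE_glue_add (fun q hq => (mem_below hs hD₂ hq).2), numGE_right,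
      conjSeq_conjSeq hcols hzero]
    exact min_eq_left ((s.numGE_antitone (by omega)).trans hD₂)

theorem below_glue (hB : ∀ q ∈ B, q ≤ m) : below m (glue m A B) = B := by
  have htop : (glue m A B).filter (· < m) = B.filter (· < m) := by
    rw [glue, filter_add, filter_eq_nil.2, zero_add]
    intro p hp
    obtain ⟨i, -, rfl⟩ := Multiset.mem_map.1 hp
    omega
  have hrows : B.filter (fun q => ¬ q < m) = replicate (B.numGE m) m := by
    rw [Multiset.filter_congr fun q _ => not_lt]
    exact eq_replicate_card.2 fun q hq =>
      le_antisymm (hB q (mem_filter.1 hq).1) (mem_filter.1 hq).2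
  rw [below, numGE_glue_of_le le_rfl, Nat.add_sub_cancel_left, htop, ← hrows,
    filter_add_not]

theorem right_glue (hA : ∀ q ∈ A, 0 < q ∧ q ≤ m) (hB : ∀ q ∈ B, q ≤ m) :
    right m (glue m A B) = A := by
  apply eq_of_numGE_succ_eq (fun q hq => (mem_right hq).1) (fun q hq => (hA q hq).1)
  intro i
  have hrows : Antitone fun i => A.numGE (i + 1) := fun _ _ h => A.numGE_antitone (by omega)
  have hzero : ∀ i, m ≤ i → A.numGE (i + 1) = 0 := fun i hi =>
    numGE_eq_zero fun p hp => by have := (hA p hp).2; omega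
  simp only [numGE_right, numGE_glue_add hB, conjSeq_conjSeq hrows hzero]
  apply min_eq_left
  calc A.numGE (i + 1) ≤ card A := A.numGE_le_card _
    _ ≤ A.sum := by simpa using card_nsmul_le_sum fun q hq => (hA q hq).1
    _ ≤ (glue m A B).sum := by rw [sum_glue fun q hq => (hA q hq).2]; omega

end Durfee

open Nat.Partition Durfee

theorem hasDurfeeSide_iff {n : ℕ} (P : n.Partition) (d : ℕ) :
    HasDurfeeSide P d ↔ d ≤ P.parts.numGE d ∧ P.parts.numGE (d + 1) ≤ d := by
  unfold HasDurfeeSide Multiset.numGE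
  omega

theorem card_hasDurfeeSide_eq_zero_of_lt {m n : ℕ} (h : n < m ^ 2) :
    #{P : n.Partition | HasDurfeeSide P m} = 0 := by
  rw [card_eq_zero, filter_eq_empty_iff]
  intro P _ hP
  have hsum := P.parts.mul_numGE_le_sum m
  have hsq := Nat.mul_le_mul_left m ((hasDurfeeSide_iff P m).1 hP).1
  rw [P.parts_sum] at hsum
  nlinarith

theorem Nat.Partition.sigma_ext {x y : Σ ab : ℕ × ℕ, ab.1.Partition × ab.2.Partition}
    (h₁ : x.2.1.parts = y.2.1.parts) (h₂ : x.2.2.parts = y.2.2.parts) : x = y := by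
  obtain ⟨⟨a, b⟩, A, B⟩ := x
  obtain ⟨⟨c, d⟩, C, D⟩ := y
  obtain rfl : a = c := A.parts_sum.symm.trans (h₁ ▸ C.parts_sum)
  obtain rfl : b = d := B.parts_sum.symm.trans (h₂ ▸ D.parts_sum)
  obtain rfl := Nat.Partition.ext h₁
  obtain rfl := Nat.Partition.ext h₂
  rfl

theorem card_hasDurfeeSide_sq_add (m k : ℕ) :
    #{P : (m ^ 2 + k).Partition | HasDurfeeSide P m} =
      ∑ x ∈ antidiagonal k, #(restricted x.1 (· ≤ m)) * #(restricted x.2 (· ≤ m)) := by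
  simp_rw [← card_product]
  rw [← card_sigma]
  have mem_pairs {x : Σ ab : ℕ × ℕ, ab.1.Partition × ab.2.Partition} :
      x ∈ (antidiagonal k).sigma (fun x => restricted x.1 (· ≤ m) ×ˢ restricted x.2 (· ≤ m)) ↔
        x.1.1 + x.1.2 = k ∧ (∀ q ∈ x.2.1.parts, q ≤ m) ∧ ∀ q ∈ x.2.2.parts, q ≤ m := by
    simp [restricted]
  have mem_durfee {P : (m ^ 2 + k).Partition} :
      P ∈ ({P | HasDurfeeSide P m} : Finset _) ↔
        m ≤ P.parts.numGE m ∧ P.parts.numGE (m + 1) ≤ m := by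
    simp [hasDurfeeSide_iff]
  refine card_bij'
    (fun P hP => ⟨((right m P.parts).sum, (below m P.parts).sum),
      ⟨right m P.parts, fun hq => (mem_right hq).1, rfl⟩,
      ⟨below m P.parts, fun hq => (mem_below (fun _ => P.parts_pos) (mem_durfee.1 hP).2 hq).1,
        rfl⟩⟩)
    (fun x hx => ⟨glue m x.2.1.parts x.2.2.parts,
      fun hq => glue_pos (fun _ => x.2.2.parts_pos) _ hq, by
        rw [sum_glue (mem_pairs.1 hx).2.1, x.2.1.parts_sum, x.2.2.parts_sum, sq,
          add_assoc, (mem_pairs.1 hx).1]⟩)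
    ?_ ?_ ?_ ?_
  · intro P hP
    obtain ⟨hD₁, hD₂⟩ := mem_durfee.1 hP
    refine mem_pairs.2 ⟨?_, fun q hq => (mem_right hq).2.trans hD₂,
      fun q hq => (mem_below (fun _ => P.parts_pos) hD₂ hq).2⟩
    have := sum_glue (B := below m P.parts) fun q hq => (mem_right hq).2.trans hD₂
    rw [glue_right_below (fun _ => P.parts_pos) hD₁ hD₂, P.parts_sum] at this
    dsimp only
    linarith
  · intro x hx
    obtain ⟨-, hA, hB⟩ := mem_pairs.1 hx
    refine mem_durfee.2 ⟨?_, ?_⟩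
    · rw [numGE_glue_of_le le_rfl]
      exact Nat.le_add_right m _
    · exact (numGE_glue_add hB 0).trans_le (conjSeq_le _ _ _)
  · intro P hP
    obtain ⟨hD₁, hD₂⟩ := mem_durfee.1 hP
    exact Nat.Partition.ext (glue_right_below (fun _ => P.parts_pos) hD₁ hD₂)
  · intro x hx
    obtain ⟨-, hA, hB⟩ := mem_pairs.1 hx
    exact Nat.Partition.sigma_ext
      (right_glue (fun q hq => ⟨x.2.1.parts_pos hq, hA q hq⟩) hB)
      (below_glue hB)

open scoped PowerSeries.WithPiTopology

theorem oneMinusXInv_eq_tsum {k : ℕ} (hk : k ≠ 0) :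
    oneMinusXInv k = ∑' j, (X : PowerSeries ℤ) ^ (k * j) := by
  have hX : constantCoeff (X ^ k : PowerSeries ℤ) = 0 := by simp [hk]
  simp_rw [pow_mul]
  refine left_inv_eq_right_inv ?_
    (WithPiTopology.one_sub_mul_tsum_pow_of_constantCoeff_eq_zero hX)
  rw [mul_comm]
  exact mul_invOfUnit _ _ (by simp [hX])

theorem powerSeriesMk_card_restricted_le_eq_prod (m : ℕ) :
    PowerSeries.mk (fun n ↦ (#(Nat.Partition.restricted n (· ≤ m)) : ℤ)) =
      ∏ k ∈ Icc 1 m, oneMinusXInv k := by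
  rw [Nat.Partition.powerSeriesMk_card_restricted_eq_tprod,
    tprod_eq_prod (s := range m) (fun i hi => by simp_all), ← Finset.Ico_add_one_right_eq_Icc,
    prod_Ico_eq_prod_range]
  refine prod_congr rfl fun i hi => ?_
  rw [if_pos (by simpa using hi), oneMinusXInv_eq_tsum (by omega), add_comm]

theorem coeff_durfeeTerm_eq_card_partitions_durfee_general (m : ℕ) (n : ℕ) :
    (PowerSeries.coeff (R := ℤ) n)
        (PowerSeries.X ^ (m ^ 2) * ∏ k ∈ Finset.Icc 1 m, (oneMinusXInv k) ^ 2) =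
      (Finset.univ.filter fun P : Nat.Partition n => HasDurfeeSide P m).card := by
  rw [prod_pow, ← powerSeriesMk_card_restricted_le_eq_prod, coeff_X_pow_mul']
  rcases lt_or_ge n (m ^ 2) with h | h
  · rw [if_neg h.not_ge, card_hasDurfeeSide_eq_zero_of_lt h, Nat.cast_zero]
  · obtain ⟨k, rfl⟩ := Nat.exists_eq_add_of_le h
    rw [if_pos h, Nat.add_sub_cancel_left, sq, coeff_mul, card_hasDurfeeSide_sq_add]
    simp

theorem coeff_durfeeTerm_eq_card_partitions_durfee (m : ℕ) (hm : 0 < m) (n : ℕ) :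
    (PowerSeries.coeff (R := ℤ) n)
        (PowerSeries.X ^ (m ^ 2) * ∏ k ∈ Finset.Icc 1 m, (oneMinusXInv k) ^ 2) =
      (Finset.univ.filter fun P : Nat.Partition n => HasDurfeeSide P m).card :=
  coeff_durfeeTerm_eq_card_partitions_durfee_general m n
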